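/- (Unbiasedness of the two-point Gaussian gradient estimator.) Let d : ℕ, L ≥ 0 and μ ≠ 0, and let f : EuclideanSpace ℝ (Fin d) → ℝ have L-Lipschitz gradient. Then for every x, ∫ ((f(x + μ • u) − f(x))/μ) • u ∂γ_d(u) = ∫ ∇f(x + μ • u) ∂γ_d(u); that is, the expectation of the two-point zeroth-order gradient estimator at x equals the gradient of the μ-smooth approximation f_μ at x. -/

import Mathlib

/-!
With `g u = (f (x + μ • u) - f x) / μ`, the estimator is `g u • u` and `∇g u = ∇f (x + μ • u)`,
so the claim is Stein's identity `E[g(u) u] = E[∇g(u)]` for the standard Gaussian. In one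
dimension it is integration by parts against the density `φ`, since `φ' t = -t φ t`; in `d`
dimensions Fubini reduces each coordinate to the one-dimensional case. The Lipschitz gradient
gives `∇g` linear and `g` quadratic growth, and Gaussian measures have moments of all orders,
so every integral involved is finite.
-/

open MeasureTheory RealInnerProductSpace

/-- The standard Gaussian measure on `EuclideanSpace ℝ (Fin d)`, i.e. the product of `d`
copies of the real standard Gaussian measure. -/
noncomputable def stdGaussian (d : ℕ) : Measure (EuclideanSpace ℝ (Fin d)) :=
  (Measure.pi (fun _ : Fin d => ProbabilityTheory.gaussianReal 0 1)).map
    (MeasurableEquiv.toLp 2 (Fin d → ℝ))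

open ProbabilityTheory (gaussianReal gaussianPDFReal)
open scoped NNReal

lemma hasDerivAt_gaussianPDFReal (m : ℝ) (v : ℝ≥0) (x : ℝ) :
    HasDerivAt (gaussianPDFReal m v) (-((x - m) / v) * gaussianPDFReal m v x) x := by
  have h : HasDerivAt (fun y => -(y - m) ^ 2 / (2 * v)) (-((x - m) / v)) x :=
    (((hasDerivAt_id x).sub_const m).fun_pow 2).fun_neg.div_const (2 * (v : ℝ)) |>.congr_deriv
      (by simp only [id]; ring)
  exact (h.exp.const_mul (Real.sqrt (2 * Real.pi * v))⁻¹).congr_deriv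
    (by rw [ProbabilityTheory.gaussianPDFReal_def]; ring)

lemma integrable_gaussianReal_iff {E : Type*} [NormedAddCommGroup E] [NormedSpace ℝ E]
    {m : ℝ} {v : ℝ≥0} (hv : v ≠ 0) {F : ℝ → E} :
    Integrable F (gaussianReal m v) ↔ Integrable (fun x => gaussianPDFReal m v x • F x) := by
  rw [ProbabilityTheory.gaussianReal_of_var_ne_zero _ hv,
    integrable_withDensity_iff_integrable_smul' (by fun_prop)
      (ae_of_all _ fun _ => ProbabilityTheory.gaussianPDF_lt_top)]
  simp [ProbabilityTheory.toReal_gaussianPDF]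

theorem integral_sub_mul_gaussianReal_eq_mul_integral_deriv {m : ℝ} {v : ℝ≥0} (hv : v ≠ 0)
    {h h' : ℝ → ℝ} (hh : ∀ x, HasDerivAt h (h' x) x) (hi : Integrable h (gaussianReal m v))
    (hxi : Integrable (fun x => (x - m) * h x) (gaussianReal m v))
    (h'i : Integrable h' (gaussianReal m v)) :
    ∫ x, (x - m) * h x ∂gaussianReal m v = v * ∫ x, h' x ∂gaussianReal m v := by
  have hv' : (v : ℝ) ≠ 0 := NNReal.coe_ne_zero.mpr hv
  -- `-v h φ` is an integrable primitive of `((x - m) h - v h') φ`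
  have key : ∫ x, gaussianPDFReal m v x • ((x - m) * h x - v * h' x) = 0 := by
    refine integral_eq_zero_of_hasDerivAt_of_integrable
      (f := fun x => -(v * (gaussianPDFReal m v x • h x))) (fun x => ?_)
      ((integrable_gaussianReal_iff hv).1 (hxi.sub (h'i.const_mul _)))
      (((integrable_gaussianReal_iff hv).1 hi).const_mul _).neg
    refine (((hasDerivAt_gaussianPDFReal m v x).mul (hh x)).const_mul (v : ℝ)).neg.congr_deriv ?_
    simp only [smul_eq_mul]
    field_simp
    ring
  rw [← ProbabilityTheory.integral_gaussianReal_eq_integral_smul hv,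
    integral_sub hxi (h'i.const_mul _), integral_const_mul] at key
  linarith

theorem integral_eval_mul_pi_gaussianReal_eq_integral_partialDeriv {n : ℕ} (i : Fin (n + 1))
    {G G' : (Fin (n + 1) → ℝ) → ℝ}
    (hG : ∀ x, HasDerivAt (fun t => G (Function.update x i t)) (G' x) (x i))
    (hGi : Integrable G (Measure.pi fun _ => gaussianReal 0 1))
    (hxG : Integrable (fun x => x i * G x) (Measure.pi fun _ => gaussianReal 0 1))
    (hG'i : Integrable G' (Measure.pi fun _ => gaussianReal 0 1)) :
    ∫ x, x i * G x ∂(Measure.pi fun _ => gaussianReal 0 1) =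
      ∫ x, G' x ∂(Measure.pi fun _ => gaussianReal 0 1) := by
  set P' := Measure.pi fun _ : Fin n => gaussianReal 0 1
  have hsplit := (measurePreserving_piFinSuccAbove (fun _ => gaussianReal 0 1) i).symm
  have slice : ∀ {F : (Fin (n + 1) → ℝ) → ℝ},
      Integrable F (Measure.pi fun _ => gaussianReal 0 1) →
      (∫ x, F x ∂(Measure.pi fun _ => gaussianReal 0 1) =
        ∫ w, ∫ t, F (i.insertNth t w) ∂gaussianReal 0 1 ∂P') ∧
      ∀ᵐ w ∂P', Integrable (fun t => F (i.insertNth t w)) (gaussianReal 0 1) := by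
    intro F hF
    have hFe := (hsplit.integrable_comp_emb (MeasurableEquiv.measurableEmbedding _)).2 hF
    refine ⟨?_, hFe.prod_left_ae⟩
    rw [← hsplit.integral_comp']
    exact integral_prod_symm _ hFe
  obtain ⟨hl, -⟩ := slice hxG
  obtain ⟨hr, hG'w⟩ := slice hG'i
  rw [hl, hr]
  refine integral_congr_ae ?_
  filter_upwards [(slice hGi).2, (slice hxG).2, hG'w] with w hGw hxGw hG'w
  simpa using integral_sub_mul_gaussianReal_eq_mul_integral_deriv one_ne_zero
    (fun t => by simpa using hG (i.insertNth t w)) hGw (by simpa using hxGw) hG'w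

instance (d : ℕ) : IsProbabilityMeasure (stdGaussian d) :=
  Measure.isProbabilityMeasure_map (MeasurableEquiv.toLp 2 (Fin d → ℝ)).measurable.aemeasurable

lemma stdGaussian_eq (d : ℕ) :
    stdGaussian d = ProbabilityTheory.stdGaussian (EuclideanSpace ℝ (Fin d)) :=
  ProbabilityTheory.map_pi_eq_stdGaussian

lemma integral_stdGaussian {d : ℕ} {X : Type*} [NormedAddCommGroup X] [NormedSpace ℝ X]
    (F : EuclideanSpace ℝ (Fin d) → X) :
    ∫ u, F u ∂stdGaussian d = ∫ x, F (WithLp.toLp 2 x) ∂(Measure.pi fun _ => gaussianReal 0 1) :=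
  integral_map_equiv _ _

lemma integrable_stdGaussian_iff {d : ℕ} {X : Type*} [NormedAddCommGroup X]
    {F : EuclideanSpace ℝ (Fin d) → X} :
    Integrable F (stdGaussian d) ↔
      Integrable (fun x => F (WithLp.toLp 2 x)) (Measure.pi fun _ => gaussianReal 0 1) :=
  integrable_map_equiv _ _

lemma gradient_apply_eq_fderiv_single {d : ℕ} (g : EuclideanSpace ℝ (Fin d) → ℝ)
    (u : EuclideanSpace ℝ (Fin d)) (i : Fin d) :
    gradient g u i = fderiv ℝ g u (EuclideanSpace.single i 1) := by
  rw [← inner_gradient_left, EuclideanSpace.inner_single_right]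
  simp

theorem integral_smul_stdGaussian_eq_integral_gradient {d : ℕ} {g : EuclideanSpace ℝ (Fin d) → ℝ}
    (hg : Differentiable ℝ g) (hgi : Integrable g (stdGaussian d))
    (hgu : Integrable (fun u => g u • u) (stdGaussian d))
    (hgrad : Integrable (gradient g) (stdGaussian d)) :
    ∫ u, g u • u ∂stdGaussian d = ∫ u, gradient g u ∂stdGaussian d := by
  ext i
  obtain ⟨n, rfl⟩ := Nat.exists_eq_add_one_of_ne_zero i.pos.ne'
  have hcoord : ∀ {F : EuclideanSpace ℝ (Fin (n + 1)) → EuclideanSpace ℝ (Fin (n + 1))},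
      Integrable F (stdGaussian (n + 1)) →
        (∫ u, F u ∂stdGaussian (n + 1)) i = ∫ u, F u i ∂stdGaussian (n + 1) :=
    fun hF => ((EuclideanSpace.proj i).integral_comp_comm hF).symm
  rw [hcoord hgu, hcoord hgrad, integral_stdGaussian, integral_stdGaussian]
  simp only [PiLp.smul_apply, smul_eq_mul, gradient_apply_eq_fderiv_single]
  rw [integral_congr_ae (ae_of_all _ fun x => mul_comm _ _)]
  refine integral_eval_mul_pi_gaussianReal_eq_integral_partialDeriv i (fun x => ?_)
    (integrable_stdGaussian_iff.1 hgi) ?_ ?_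
  · have hline : HasDerivAt (fun t => WithLp.toLp 2 (Function.update x i t))
        (EuclideanSpace.single i (1 : ℝ)) (x i) :=
      (EuclideanSpace.equiv (Fin (n + 1)) ℝ).symm.hasFDerivAt.comp_hasDerivAt _
        (hasDerivAt_update x i (x i))
    have h := (hg _).hasFDerivAt.comp_hasDerivAt _ hline
    rw [Function.update_eq_self] at h
    exact h
  · simpa [mul_comm] using
      integrable_stdGaussian_iff.1 ((EuclideanSpace.proj (𝕜 := ℝ) i).integrable_comp hgu)
  · simpa [gradient_apply_eq_fderiv_single] using
      integrable_stdGaussian_iff.1 ((EuclideanSpace.proj (𝕜 := ℝ) i).integrable_comp hgrad)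

lemma integrable_one_add_norm_pow_stdGaussian (d k : ℕ) :
    Integrable (fun u => (1 + ‖u‖) ^ k) (stdGaussian d) := by
  have hone : MemLp (fun _ : EuclideanSpace ℝ (Fin d) => (1 : ℝ)) k (stdGaussian d) :=
    memLp_const 1
  have hnorm : MemLp (fun u : EuclideanSpace ℝ (Fin d) => ‖u‖) k (stdGaussian d) := by
    rw [stdGaussian_eq]
    exact (ProbabilityTheory.IsGaussian.memLp_id _ k (by simp)).norm
  have hpos (u : EuclideanSpace ℝ (Fin d)) : |1 + ‖u‖| = 1 + ‖u‖ := abs_of_nonneg (by positivity)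
  simpa [hpos] using (hone.add hnorm).integrable_norm_pow'

lemma integrable_stdGaussian_of_norm_le {d : ℕ} {X : Type*} [NormedAddCommGroup X]
    {F : EuclideanSpace ℝ (Fin d) → X} (hF : AEStronglyMeasurable F (stdGaussian d)) (C : ℝ)
    (k : ℕ) (hle : ∀ u, ‖F u‖ ≤ C * (1 + ‖u‖) ^ k) : Integrable F (stdGaussian d) :=
  ((integrable_one_add_norm_pow_stdGaussian d k).const_mul C).mono' hF (ae_of_all _ hle)

lemma abs_sub_le_of_norm_gradient_le {F : Type*} [NormedAddCommGroup F] [InnerProductSpace ℝ F]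
    [CompleteSpace F] {g : F → ℝ} (hg : Differentiable ℝ g) {A B : ℝ} (hB : 0 ≤ B)
    (hgrad : ∀ u, ‖gradient g u‖ ≤ A + B * ‖u‖) (u : F) :
    |g u - g 0| ≤ (A + B * ‖u‖) * ‖u‖ := by
  have hball : ∀ z ∈ Metric.closedBall (0 : F) ‖u‖, ‖fderiv ℝ g z‖ ≤ A + B * ‖u‖ := by
    intro z hz
    rw [← toDual_gradient, LinearIsometryEquiv.norm_map]
    exact (hgrad z).trans (by gcongr; simpa using hz)
  simpa using (convex_closedBall (0 : F) ‖u‖).norm_image_sub_le_of_norm_fderiv_le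
    (fun z _ => hg z) hball (Metric.mem_closedBall_self (norm_nonneg u)) (by simp)

theorem integral_smul_stdGaussian_eq_integral_gradient_of_norm_gradient_le {d : ℕ}
    {g : EuclideanSpace ℝ (Fin d) → ℝ} (hg : Differentiable ℝ g) {A B : ℝ} (hB : 0 ≤ B)
    (hgrad : ∀ u, ‖gradient g u‖ ≤ A + B * ‖u‖) :
    ∫ u, g u • u ∂stdGaussian d = ∫ u, gradient g u ∂stdGaussian d := by
  have hA : 0 ≤ A := by simpa using (norm_nonneg _).trans (hgrad 0)
  set C := |g 0| + A + B
  have hquad (u : EuclideanSpace ℝ (Fin d)) : |g u| ≤ C * (1 + ‖u‖) ^ 2 := by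
    have := abs_sub_le_of_norm_gradient_le hg hB hgrad u
    have := abs_sub_abs_le_abs_sub (g u) (g 0)
    have := norm_nonneg u
    nlinarith [abs_nonneg (g 0), mul_nonneg hB this, mul_nonneg hA this,
      mul_nonneg (abs_nonneg (g 0)) this]
  have hgm : AEStronglyMeasurable g (stdGaussian d) := hg.continuous.aestronglyMeasurable
  refine integral_smul_stdGaussian_eq_integral_gradient hg
    (integrable_stdGaussian_of_norm_le hgm C 2 hquad)
    (integrable_stdGaussian_of_norm_le (hgm.smul aestronglyMeasurable_id) C 3 fun u => ?_)
    (integrable_stdGaussian_of_norm_le ?_ (A + B) 1 fun u => ?_)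
  · rw [norm_smul, Real.norm_eq_abs]
    have := norm_nonneg u
    nlinarith [hquad u, mul_le_mul_of_nonneg_right (hquad u) this, abs_nonneg (g u)]
  · exact ((InnerProductSpace.toDual ℝ _).symm.continuous.measurable.comp
      (measurable_fderiv ℝ g)).aestronglyMeasurable
  · have := norm_nonneg u
    nlinarith [hgrad u]

theorem hasGradientAt_sub_div_comp_add_smul {F : Type*} [NormedAddCommGroup F]
    [InnerProductSpace ℝ F] [CompleteSpace F] {f : F → ℝ} {x u : F} {μ : ℝ} (hμ : μ ≠ 0)
    (hf : DifferentiableAt ℝ f (x + μ • u)) :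
    HasGradientAt (fun v => (f (x + μ • v) - f x) / μ) (gradient f (x + μ • u)) u := by
  rw [hasGradientAt_iff_hasFDerivAt, toDual_gradient]
  have hline : HasFDerivAt (fun v : F => x + μ • v) (μ • ContinuousLinearMap.id ℝ F) u :=
    ((hasFDerivAt_id u).const_smul μ).const_add x
  simp_rw [div_eq_mul_inv]
  refine ((hf.hasFDerivAt.comp u hline).sub_const (f x)).mul_const μ⁻¹ |>.congr_fderiv ?_
  ext v
  simp [field]

/-- **Unbiasedness of the two-point Gaussian gradient estimator.**
If `f` has `L`-Lipschitz gradient and `μ ≠ 0`, then the expectation of the two-point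
zeroth-order gradient estimator at `x` equals the gradient of the μ-smooth approximation,
i.e. the Gaussian-averaged gradient. -/
theorem two_point_estimator_unbiased
    (d : ℕ) (L μ : ℝ) (hL : 0 ≤ L) (hμ : μ ≠ 0)
    (f : EuclideanSpace ℝ (Fin d) → ℝ)
    (hdiff : Differentiable ℝ f)
    (hlip : ∀ x y, ‖gradient f x - gradient f y‖ ≤ L * ‖x - y‖) :
    ∀ x : EuclideanSpace ℝ (Fin d),
      (∫ u : EuclideanSpace ℝ (Fin d), ((f (x + μ • u) - f x) / μ) • u ∂(stdGaussian d)) =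
        ∫ u, gradient f (x + μ • u) ∂(stdGaussian d) := by
  intro x
  have hgrad (u : EuclideanSpace ℝ (Fin d)) :=
    hasGradientAt_sub_div_comp_add_smul (x := x) (u := u) hμ (hdiff _)
  have hbound (u : EuclideanSpace ℝ (Fin d)) :
      ‖gradient f (x + μ • u)‖ ≤ ‖gradient f x‖ + L * |μ| * ‖u‖ := by
    have := hlip (x + μ • u) x
    rw [add_sub_cancel_left, norm_smul, Real.norm_eq_abs, ← mul_assoc] at this
    linarith [norm_le_norm_add_norm_sub' (gradient f (x + μ • u)) (gradient f x)]
  rw [integral_smul_stdGaussian_eq_integral_gradient_of_norm_gradient_le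
    (fun u => (hgrad u).differentiableAt) (by positivity)
    (fun u => (hgrad u).gradient ▸ hbound u)]
  simp_rw [(hgrad _).gradient]
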